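/- arXiv:math/9201250 — 6 statements merged into one kernel-verified Lean document; each statement's English description precedes it below -/
import Mathlib

section
/- Let B be a Boolean algebra and f an automorphism of B. Let J = {x ∈ B : for every y ≤ x, f(y) = y} and I = {x ∈ B : f(x) ⊓ x = 0}. Then J ∪ I is dense in B, i.e., for every x ∈ B with x ≠ 0 there exists z with 0 < z ≤ x and z ∈ J ∪ I. -/
/-- For an automorphism `f` of a Boolean algebra, the union of
`J = {x : ∀ y ≤ x, f y = y}` and `I = {x : f x ⊓ x = ⊥}` is dense. -/
theorem stmt_1 {B : Type*} [BooleanAlgebra B] (f : B ≃o B)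
    (J : Set B) (hJ : J = {x : B | ∀ y ≤ x, f y = y})
    (I : Set B) (hI : I = {x : B | f x ⊓ x = ⊥}) :
    ∀ x : B, x ≠ ⊥ → ∃ z : B, ⊥ < z ∧ z ≤ x ∧ z ∈ J ∪ I := by
  subst hJ hI
  intro x hx
  by_cases h : ∀ y ≤ x, f y = y
  · exact ⟨x, hx.bot_lt, le_rfl, Or.inl h⟩
  · push_neg at h
    obtain ⟨y, hyx, hfy⟩ := h
    rcases eq_or_ne (y \ f y) ⊥ with h1 | h1
    · -- y ≤ f y, take z = f.symm (f y \ y)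
      have hy : y ≤ f y := sdiff_eq_bot_iff.mp h1
      have hw : f y \ y ≠ ⊥ := by
        intro hb
        exact hfy (le_antisymm (sdiff_eq_bot_iff.mp hb) hy)
      set z := f.symm (f y \ y) with hz
      have hzy : z ≤ y := by
        have h3 : f.symm (f y \ y) ≤ f.symm (f y) := f.symm.monotone sdiff_le
        rw [f.symm_apply_apply] at h3
        exact h3
      have hzb : z ≠ ⊥ := by
        intro hb
        apply hw
        have h4 := congrArg f hb
        rw [f.apply_symm_apply, map_bot] at h4
        exact h4
      have hfz : f z = f y \ y := by simp [hz]
      refine ⟨z, hzb.bot_lt, hzy.trans hyx, Or.inr ?_⟩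
      have h2 : f z ⊓ z ≤ yᶜ ⊓ y := by
        refine inf_le_inf ?_ hzy
        rw [hfz, sdiff_eq]
        exact inf_le_right
      simpa using le_bot_iff.mp (h2.trans_eq (by simp))
    · refine ⟨y \ f y, h1.bot_lt, sdiff_le.trans hyx, Or.inr ?_⟩
      have h2 : f (y \ f y) ⊓ (y \ f y) ≤ f y ⊓ (f y)ᶜ := by
        refine inf_le_inf (f.monotone sdiff_le) ?_
        rw [sdiff_eq]
        exact inf_le_right
      simpa using le_bot_iff.mp (h2.trans_eq (by simp))
end

section
/- Let B be an infinite Boolean algebra. Define Psub(B) as the family of subsets of B containing 0 and closed under join, meet, and difference (but not necessarily complementation). Then |Psub(B)| = |Sub(B)|, the number of Boolean subalgebras of B. -/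
/-- A (Boolean) subalgebra of `B`, as a subset. -/
def IsSubalg {B : Type*} [BooleanAlgebra B] (S : Set B) : Prop :=
  ⊥ ∈ S ∧ ⊤ ∈ S ∧ (∀ x ∈ S, ∀ y ∈ S, x ⊔ y ∈ S) ∧
    (∀ x ∈ S, ∀ y ∈ S, x ⊓ y ∈ S) ∧ (∀ x ∈ S, xᶜ ∈ S)

/-- A "pseudo-subalgebra": a subset containing `⊥` closed under join, meet
and difference (but not necessarily complementation). -/
def IsPsub {B : Type*} [BooleanAlgebra B] (S : Set B) : Prop :=
  ⊥ ∈ S ∧ (∀ x ∈ S, ∀ y ∈ S, x ⊔ y ∈ S) ∧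
    (∀ x ∈ S, ∀ y ∈ S, x ⊓ y ∈ S) ∧ (∀ x ∈ S, ∀ y ∈ S, x \ y ∈ S)

namespace Stmt8

variable {B : Type*} [BooleanAlgebra B]

theorem isPsub_of_isSubalg {S : Set B} (h : IsSubalg S) : IsPsub S :=
  ⟨h.1, h.2.2.1, h.2.2.2.1, fun x hx y hy => by
    rw [sdiff_eq]; exact h.2.2.2.1 x hx yᶜ (h.2.2.2.2 y hy)⟩

theorem isSubalg_of_top {S : Set B} (h : IsPsub S) (hT : ⊤ ∈ S) : IsSubalg S :=
  ⟨h.1, hT, h.2.1, h.2.2.1, fun x hx => by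
    have hx' : ⊤ \ x ∈ S := h.2.2.2 ⊤ hT x hx
    simpa [sdiff_eq] using hx'⟩

/-- The subalgebra generated by a psub: it plus complements. -/
def Alg (X : Set B) : Set B := X ∪ compl '' X

theorem mem_alg_iff {X : Set B} {a : B} : a ∈ Alg X ↔ a ∈ X ∨ aᶜ ∈ X := by
  constructor
  · rintro (h | ⟨x, hx, rfl⟩)
    · exact Or.inl h
    · exact Or.inr (by simpa using hx)
  · rintro (h | h)
    · exact Or.inl h
    · exact Or.inr ⟨aᶜ, h, compl_compl a⟩

theorem not_both {X : Set B} (hX : IsPsub X) (hT : ⊤ ∉ X) {a : B}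
    (h1 : a ∈ X) (h2 : aᶜ ∈ X) : False :=
  hT (by simpa using hX.2.1 a h1 aᶜ h2)

theorem alg_isSubalg {X : Set B} (hX : IsPsub X) : IsSubalg (Alg X) := by
  obtain ⟨h0, hsup, hinf, hsdiff⟩ := hX
  refine ⟨Or.inl h0, mem_alg_iff.2 (Or.inr (by simpa using h0)), ?_, ?_, ?_⟩
  · rintro x hx y hy
    rcases mem_alg_iff.1 hx with hx' | hx' <;> rcases mem_alg_iff.1 hy with hy' | hy'
    · exact Or.inl (hsup _ hx' _ hy')
    · refine mem_alg_iff.2 (Or.inr ?_)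
      have : yᶜ \ x ∈ X := hsdiff _ hy' _ hx'
      simpa [compl_sup, sdiff_eq, inf_comm] using this
    · refine mem_alg_iff.2 (Or.inr ?_)
      have : xᶜ \ y ∈ X := hsdiff _ hx' _ hy'
      simpa [compl_sup, sdiff_eq] using this
    · refine mem_alg_iff.2 (Or.inr ?_)
      have : xᶜ ⊓ yᶜ ∈ X := hinf _ hx' _ hy'
      simpa [compl_sup] using this
  · rintro x hx y hy
    rcases mem_alg_iff.1 hx with hx' | hx' <;> rcases mem_alg_iff.1 hy with hy' | hy'
    · exact Or.inl (hinf _ hx' _ hy')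
    · refine Or.inl ?_
      have : x \ yᶜ ∈ X := hsdiff _ hx' _ hy'
      simpa [sdiff_eq] using this
    · refine Or.inl ?_
      have : y \ xᶜ ∈ X := hsdiff _ hy' _ hx'
      simpa [sdiff_eq, inf_comm] using this
    · refine mem_alg_iff.2 (Or.inr ?_)
      have : xᶜ ⊔ yᶜ ∈ X := hsup _ hx' _ hy'
      simpa [compl_inf] using this
  · rintro x hx
    rcases mem_alg_iff.1 hx with hx' | hx'
    · exact mem_alg_iff.2 (Or.inr (by simpa using hx'))
    · exact Or.inl hx'

theorem dcl {X : Set B} (hX : IsPsub X) {c s : B} (hc : c ∈ Alg X) (hs : s ∈ X)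
    (hle : c ≤ s) : c ∈ X := by
  rcases mem_alg_iff.1 hc with h | h
  · exact h
  · have hcc : c = s \ cᶜ := by
      rw [sdiff_eq, compl_compl]
      exact (inf_eq_right.2 hle).symm
    rw [hcc]; exact hX.2.2.2 s hs cᶜ h

def IsUltra (V : Set B) : Prop :=
  ⊤ ∈ V ∧ ⊥ ∉ V ∧ (∀ a : B, a ∈ V ↔ aᶜ ∉ V) ∧ (∀ a b : B, a ⊓ b ∈ V ↔ a ∈ V ∧ b ∈ V)

/-- The "agreement" subalgebra coding the maximal ideal `X`. -/
def Esub (V0 X : Set B) : Set B := {a ∈ Alg X | aᶜ ∈ X ↔ a ∈ V0}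

theorem compl_inf_mem {X : Set B} (hX : IsPsub X) {a b : B}
    (ha : a ∈ Alg X) (hb : b ∈ Alg X) :
    (a ⊓ b)ᶜ ∈ X ↔ aᶜ ∈ X ∧ bᶜ ∈ X := by
  rw [compl_inf]
  constructor
  · intro h
    have haA : aᶜ ∈ Alg X := (alg_isSubalg hX).2.2.2.2 a ha
    have hbA : bᶜ ∈ Alg X := (alg_isSubalg hX).2.2.2.2 b hb
    exact ⟨dcl hX haA h le_sup_left, dcl hX hbA h le_sup_right⟩
  · rintro ⟨h1, h2⟩
    exact hX.2.1 _ h1 _ h2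

theorem esub_isSubalg {V0 X : Set B} (hV0 : IsUltra V0) (hX : IsPsub X) (hT : ⊤ ∉ X) :
    IsSubalg (Esub V0 X) := by
  obtain ⟨hVt, hVb, hVc, hVi⟩ := hV0
  have hAlg := alg_isSubalg hX
  have hcomplE : ∀ a ∈ Esub V0 X, aᶜ ∈ Esub V0 X := by
    rintro a ⟨haA, hiff⟩
    refine ⟨hAlg.2.2.2.2 a haA, ?_⟩
    rw [compl_compl]
    have e1 : aᶜ ∈ V0 ↔ a ∉ V0 := by
      have := hVc aᶜ; rw [compl_compl] at this; tauto
    have e2 : a ∈ X → aᶜ ∉ X := fun h1 h2 => not_both hX hT h1 h2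
    have e3 : a ∈ X ∨ aᶜ ∈ X := mem_alg_iff.1 haA
    tauto
  have hinfE : ∀ a ∈ Esub V0 X, ∀ b ∈ Esub V0 X, a ⊓ b ∈ Esub V0 X := by
    rintro a ⟨haA, ha⟩ b ⟨hbA, hb⟩
    refine ⟨hAlg.2.2.2.1 a haA b hbA, ?_⟩
    rw [compl_inf_mem hX haA hbA, hVi a b]
    tauto
  refine ⟨?_, ?_, ?_, hinfE, hcomplE⟩
  · exact ⟨Or.inl hX.1, by rw [compl_bot]; exact iff_of_false hT hVb⟩
  · exact ⟨mem_alg_iff.2 (Or.inr (by simpa using hX.1)),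
      by rw [compl_top]; exact iff_of_true hX.1 hVt⟩
  · rintro a ha b hb
    have h1 := hcomplE _ (hinfE _ (hcomplE a ha) _ (hcomplE b hb))
    simpa [compl_inf, compl_compl] using h1

theorem esub_inj {V0 : Set B} (hV0 : IsUltra V0) {X Y : Set B}
    (hX : IsPsub X) (hY : IsPsub Y) (hTX : ⊤ ∉ X) (hTY : ⊤ ∉ Y)
    (hA : Alg X = Alg Y) (hE : Esub V0 X = Esub V0 Y) : X ⊆ Y := by
  intro a haX
  have haAY : a ∈ Alg Y := hA ▸ Or.inl haX
  rcases mem_alg_iff.1 haAY with h | h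
  · exact h
  · exfalso
    by_cases hv : a ∈ V0
    · have hmem : a ∈ Esub V0 Y := ⟨haAY, iff_of_true h hv⟩
      rw [← hE] at hmem
      exact not_both hX hTX haX (hmem.2.2 hv)
    · have hacv : aᶜ ∈ V0 := by
        have := hV0.2.2.1 a; tauto
      have hmem : aᶜ ∈ Esub V0 X :=
        ⟨mem_alg_iff.2 (Or.inr (by simpa using haX)),
          by rw [compl_compl]; exact iff_of_true haX hacv⟩
      rw [hE] at hmem
      have h2 := hmem.2
      rw [compl_compl] at h2
      exact not_both hY hTY (h2.2 hacv) h

/-! ### Existence of an ultrafilter -/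

def IsFilt (V : Set B) : Prop :=
  ⊤ ∈ V ∧ ⊥ ∉ V ∧ (∀ a ∈ V, ∀ b ∈ V, a ⊓ b ∈ V) ∧ ∀ a ∈ V, ∀ b : B, a ≤ b → b ∈ V

theorem ext_isFilt {V : Set B} (hV : IsFilt V) {u : B} (hu : ∀ f ∈ V, f ⊓ u ≠ ⊥) :
    IsFilt {b : B | ∃ f ∈ V, f ⊓ u ≤ b} ∧ V ⊆ {b : B | ∃ f ∈ V, f ⊓ u ≤ b} ∧
      u ∈ {b : B | ∃ f ∈ V, f ⊓ u ≤ b} := by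
  obtain ⟨ht, hb, hi, hup⟩ := hV
  refine ⟨⟨⟨⊤, ht, le_top⟩, ?_, ?_, ?_⟩, ?_, ⟨⊤, ht, by simp⟩⟩
  · rintro ⟨f, hf, hle⟩
    exact hu f hf (le_bot_iff.1 hle)
  · rintro a ⟨f, hf, hfa⟩ b ⟨g, hg, hgb⟩
    refine ⟨f ⊓ g, hi _ hf _ hg, le_inf ?_ ?_⟩
    · exact le_trans (by gcongr; exact inf_le_left) hfa
    · exact le_trans (by gcongr; exact inf_le_right) hgb
  · rintro a ⟨f, hf, hfa⟩ b hab
    exact ⟨f, hf, hfa.trans hab⟩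
  · intro f hf
    exact ⟨f, hf, inf_le_left⟩

theorem exists_isUltra [Nontrivial B] : ∃ V : Set B, IsUltra V := by
  classical
  obtain ⟨m, -, hm⟩ := zorn_subset_nonempty {V : Set B | IsFilt V}
    (fun c hc hchain hne => by
      refine ⟨⋃₀ c, ⟨?_, ?_, ?_, ?_⟩, fun s hs => Set.subset_sUnion_of_mem hs⟩
      · obtain ⟨V, hV⟩ := hne
        exact ⟨V, hV, (hc hV).1⟩
      · rintro ⟨V, hV, hbV⟩
        exact (hc hV).2.1 hbV
      · rintro a ⟨V, hV, haV⟩ b ⟨W, hW, hbW⟩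
        rcases hchain.total hV hW with h | h
        · exact ⟨W, hW, (hc hW).2.2.1 _ (h haV) _ hbW⟩
        · exact ⟨V, hV, (hc hV).2.2.1 _ haV _ (h hbW)⟩
      · rintro a ⟨V, hV, haV⟩ b hab
        exact ⟨V, hV, (hc hV).2.2.2 _ haV _ hab⟩)
    {⊤} (by
      refine ⟨rfl, ?_, ?_, ?_⟩
      · simp [bot_ne_top]
      · rintro a rfl b rfl; simp
      · rintro a rfl b hab; simpa using le_antisymm le_top hab |>.symm ▸ rfl)
  have hmem := hm.1
  obtain ⟨ht, hb, hi, hup⟩ := hmem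
  have htotal : ∀ a : B, a ∈ m ∨ aᶜ ∈ m := by
    intro a
    by_contra hcon
    push_neg at hcon
    obtain ⟨ha, hac⟩ := hcon
    have key : (∀ f ∈ m, f ⊓ a ≠ ⊥) ∨ (∀ f ∈ m, f ⊓ aᶜ ≠ ⊥) := by
      by_contra hk
      push_neg at hk
      obtain ⟨⟨f, hf, hfa⟩, ⟨g, hg, hga⟩⟩ := hk
      have hfg : f ⊓ g ∈ m := hi _ hf _ hg
      have : f ⊓ g = ⊥ := by
        have h1 : f ⊓ g ≤ (f ⊓ a) ⊔ (g ⊓ aᶜ) := by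
          have : f ⊓ g = (f ⊓ g ⊓ a) ⊔ (f ⊓ g ⊓ aᶜ) := by
            rw [← inf_sup_left, sup_compl_eq_top, inf_top_eq]
          rw [this]
          exact sup_le_sup (inf_le_inf_right a inf_le_left) (inf_le_inf_right aᶜ inf_le_right)
        rw [hfa, hga, sup_idem] at h1
        exact le_bot_iff.1 h1
      rw [this] at hfg
      exact hb hfg
    rcases key with hk | hk
    · obtain ⟨hfilt, hsub, humem⟩ := ext_isFilt ⟨ht, hb, hi, hup⟩ hk
      have := hm.2 hfilt hsub
      exact ha (this humem)
    · obtain ⟨hfilt, hsub, humem⟩ := ext_isFilt ⟨ht, hb, hi, hup⟩ hk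
      have := hm.2 hfilt hsub
      exact hac (this humem)
  refine ⟨m, ht, hb, ?_, ?_⟩
  · intro a
    constructor
    · intro h1 h2
      have : a ⊓ aᶜ ∈ m := hi _ h1 _ h2
      rw [inf_compl_eq_bot] at this
      exact hb this
    · intro h
      rcases htotal a with h' | h'
      · exact h'
      · exact absurd h' h
  · intro a b
    constructor
    · intro h
      exact ⟨hup _ h _ inf_le_left, hup _ h _ inf_le_right⟩
    · rintro ⟨h1, h2⟩
      exact hi _ h1 _ h2

/-! ### There are infinitely many subalgebras -/

theorem pair_isPsub (a : B) : IsPsub ({⊥, a} : Set B) := by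
  refine ⟨Or.inl rfl, ?_, ?_, ?_⟩ <;>
  · rintro x (rfl | rfl) y (rfl | rfl) <;> simp

theorem subalg_infinite [Infinite B] : Infinite {S : Set B // IsSubalg S} := by
  classical
  set g : B → Set B := fun a => Alg {⊥, a} with hg
  have hmem : ∀ a : B, a ∈ g a := fun a => Or.inl (Or.inr rfl)
  have hfin : ∀ a : B, (g a).Finite := by
    intro a
    exact ((Set.finite_singleton a).insert ⊥).union
      (((Set.finite_singleton a).insert ⊥).image _)
  rw [← not_finite_iff_infinite]
  intro hfinSub
  have huniv : (Set.univ : Set B) ⊆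
      ⋃ S : {S : Set B // IsSubalg S}, (g ⁻¹' {S.1}) := by
    intro a _
    exact Set.mem_iUnion.2 ⟨⟨g a, alg_isSubalg (pair_isPsub a)⟩, rfl⟩
  have hfibers : ∀ S : {S : Set B // IsSubalg S}, (g ⁻¹' {S.1}).Finite := by
    intro S
    by_cases hne : ∃ a : B, g a = S.1
    · obtain ⟨a0, ha0⟩ := hne
      refine (hfin a0).subset ?_
      intro b hb
      have : g b = g a0 := by
        rw [Set.mem_preimage, Set.mem_singleton_iff] at hb
        rw [hb, ha0]
      rw [← this]; exact hmem b
    · have : g ⁻¹' {S.1} = ∅ := by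
        ext b; simp only [Set.mem_preimage, Set.mem_singleton_iff, Set.mem_empty_iff_false,
          iff_false]
        exact fun h => hne ⟨b, h⟩
      rw [this]; exact Set.finite_empty
  have : (Set.univ : Set B).Finite :=
    (Set.finite_iUnion hfibers).subset huniv
  exact Set.infinite_univ this

end Stmt8

/-- For an infinite Boolean algebra, `|Psub(B)| = |Sub(B)|`. -/
theorem stmt_8 {B : Type*} [BooleanAlgebra B] [Infinite B] :
    Cardinal.mk {S : Set B // IsPsub S} =
      Cardinal.mk {S : Set B // IsSubalg S} := by
  classical
  open Stmt8 in
  obtain ⟨V0, hV0⟩ := Stmt8.exists_isUltra (B := B)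
  haveI : Infinite {S : Set B // IsSubalg S} := Stmt8.subalg_infinite
  refine le_antisymm ?_ ?_
  · set f : {S : Set B // IsPsub S} →
        {S : Set B // IsSubalg S} ⊕ ({S : Set B // IsSubalg S} × {S : Set B // IsSubalg S}) :=
      fun X =>
        if hT : ⊤ ∈ X.1 then Sum.inl ⟨X.1, Stmt8.isSubalg_of_top X.2 hT⟩
        else Sum.inr (⟨Stmt8.Alg X.1, Stmt8.alg_isSubalg X.2⟩,
          ⟨Stmt8.Esub V0 X.1, Stmt8.esub_isSubalg hV0 X.2 hT⟩) with hf
    have hfinj : Function.Injective f := by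
      intro X Y h
      simp only [hf] at h
      by_cases hX : ⊤ ∈ X.1 <;> by_cases hY : ⊤ ∈ Y.1
      · rw [dif_pos hX, dif_pos hY] at h
        exact Subtype.ext (by simpa using h)
      · rw [dif_pos hX, dif_neg hY] at h; simp at h
      · rw [dif_neg hX, dif_pos hY] at h; simp at h
      · rw [dif_neg hX, dif_neg hY] at h
        simp only [Sum.inr.injEq, Prod.mk.injEq, Subtype.mk.injEq] at h
        exact Subtype.ext (subset_antisymm
          (Stmt8.esub_inj hV0 X.2 Y.2 hX hY h.1 h.2)
          (Stmt8.esub_inj hV0 Y.2 X.2 hY hX h.1.symm h.2.symm))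
    have h1 := Cardinal.mk_le_of_injective hfinj
    rw [Cardinal.mk_sum, Cardinal.mk_prod, Cardinal.lift_id, Cardinal.lift_id] at h1
    have hκ : (Cardinal.aleph0 : Cardinal) ≤ Cardinal.mk {S : Set B // IsSubalg S} :=
      Cardinal.aleph0_le_mk _
    calc Cardinal.mk {S : Set B // IsPsub S}
        ≤ _ := h1
      _ = Cardinal.mk {S : Set B // IsSubalg S} := by
          rw [Cardinal.mul_eq_self hκ, Cardinal.add_eq_self hκ]
  · exact Cardinal.mk_le_of_injective
      (f := fun S : {S : Set B // IsSubalg S} =>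
        (⟨S.1, Stmt8.isPsub_of_isSubalg S.2⟩ : {S : Set B // IsPsub S}))
      (fun a b h => by simp only [Subtype.mk.injEq] at h; exact Subtype.ext h)
end

section
/- Let B be an atomless Boolean algebra. Then for every x ∈ B with x ≠ 0 there exist y with 0 < y ≤ x and an infinite cardinal λ such that for every z with 0 < z ≤ y, the density of the relative algebra B ↾ z equals λ. -/
/-- The density of the relative algebra `B ↾ x`: the least cardinality of a
set of nonzero elements `≤ x` that is dense below `x`. -/
noncomputable def dens {B : Type u} [BooleanAlgebra B] (x : B) : Cardinal.{u} :=
  sInf {c | ∃ D : Set B, (∀ d ∈ D, ⊥ < d ∧ d ≤ x) ∧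
    (∀ z : B, ⊥ < z → z ≤ x → ∃ d ∈ D, d ≤ z) ∧ Cardinal.mk D = c}

/-! Density is monotone and cardinals are well-ordered, so a nonzero `y ≤ x` of least density
has that same density at every nonzero `z ≤ y`. This density is infinite: a minimal element of a
finite dense set below `y` would be an atom. -/

theorem exists_le_forall_eq_of_monotoneOn {α β : Type*} [Preorder α] [LinearOrder β]
    [WellFoundedLT β] {f : α → β} {s : Set α} (hf : MonotoneOn f s) {x : α} (hx : x ∈ s) :
    ∃ y ∈ s, y ≤ x ∧ ∀ z ∈ s, z ≤ y → f z = f y := by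
  obtain ⟨y, ⟨hys, hyx⟩, hmin⟩ :=
    exists_minimalFor_of_wellFoundedLT (fun z => z ∈ s ∧ z ≤ x) f ⟨x, hx, le_rfl⟩
  refine ⟨y, hys, hyx, fun z hzs hzy => le_antisymm (hf hzs hys hzy) ?_⟩
  exact hmin ⟨hzs, hzy.trans hyx⟩ (hf hzs hys hzy)

section Density

variable {B : Type u} [BooleanAlgebra B]

theorem exists_dense_mk_eq_dens (x : B) :
    ∃ D : Set B, (∀ d ∈ D, ⊥ < d ∧ d ≤ x) ∧
      (∀ z : B, ⊥ < z → z ≤ x → ∃ d ∈ D, d ≤ z) ∧ Cardinal.mk D = dens x :=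
  csInf_mem (s := {c | ∃ D : Set B, (∀ d ∈ D, ⊥ < d ∧ d ≤ x) ∧
      (∀ z : B, ⊥ < z → z ≤ x → ∃ d ∈ D, d ≤ z) ∧ Cardinal.mk D = c})
    ⟨_, {d | ⊥ < d ∧ d ≤ x}, fun _ hd => hd, fun z hz hzx => ⟨z, ⟨hz, hzx⟩, le_rfl⟩, rfl⟩

theorem dens_le_mk {x : B} {D : Set B} (hD : ∀ d ∈ D, ⊥ < d ∧ d ≤ x)
    (hdense : ∀ z : B, ⊥ < z → z ≤ x → ∃ d ∈ D, d ≤ z) : dens x ≤ Cardinal.mk D :=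
  csInf_le' ⟨D, hD, hdense, rfl⟩

theorem dens_mono : Monotone (dens : B → Cardinal.{u}) := by
  intro z y hzy
  obtain ⟨D, hD, hdense, hmk⟩ := exists_dense_mk_eq_dens y
  calc dens z ≤ Cardinal.mk {d ∈ D | d ≤ z} :=
        dens_le_mk (fun d hd => ⟨(hD d hd.1).1, hd.2⟩) fun w hw hwz => by
          obtain ⟨d, hd, hdw⟩ := hdense w hw (hwz.trans hzy)
          exact ⟨d, ⟨hd, hdw.trans hwz⟩, hdw⟩
    _ ≤ Cardinal.mk D := Cardinal.mk_le_mk_of_subset (Set.sep_subset _ _)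
    _ = dens y := hmk

theorem aleph0_le_dens (hatomless : ∀ a : B, ¬IsAtom a) {z : B} (hz : ⊥ < z) :
    Cardinal.aleph0 ≤ dens z := by
  obtain ⟨D, hD, hdense, hmk⟩ := exists_dense_mk_eq_dens z
  rw [← hmk, Cardinal.aleph0_le_mk_iff, Set.infinite_coe_iff]
  intro hfin
  obtain ⟨d₀, hd₀D, -⟩ := hdense z hz le_rfl
  obtain ⟨d, hdD, hmin⟩ := hfin.exists_minimalFor id D ⟨d₀, hd₀D⟩
  obtain ⟨b, hb, hbd⟩ : ∃ b : B, ⊥ < b ∧ b < d := by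
    by_contra! h
    exact hatomless d ⟨(hD d hdD).1.ne', fun b hbd => not_bot_lt_iff.mp fun hb => h b hb hbd⟩
  obtain ⟨e, heD, heb⟩ := hdense b hb (hbd.le.trans (hD d hdD).2)
  exact (heb.trans_lt hbd).not_ge (hmin heD (heb.trans hbd.le))

end Density

/-- In an atomless Boolean algebra, below every nonzero `x` there are `y` and
an infinite cardinal `λ` such that every nonzero `z ≤ y` has
`density (B ↾ z) = λ`. -/
theorem stmt_10 {B : Type u} [BooleanAlgebra B] (hatomless : ∀ a : B, ¬ IsAtom a) :
    ∀ x : B, x ≠ ⊥ → ∃ y : B, ⊥ < y ∧ y ≤ x ∧ ∃ lam : Cardinal.{u},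
      Cardinal.aleph0 ≤ lam ∧ ∀ z : B, ⊥ < z → z ≤ y → dens z = lam := by
  intro x hx
  obtain ⟨y, hy, hyx, hconst⟩ :=
    exists_le_forall_eq_of_monotoneOn (s := {z : B | ⊥ < z}) (dens_mono.monotoneOn _) hx.bot_lt
  exact ⟨y, hy, hyx, dens y, aleph0_le_dens hatomless hy, fun z hz hzy => hconst z hz hzy⟩
end

section
/- Let λ be an infinite cardinal and B a Boolean algebra with density(B ↾ x) = λ for every nonzero x ∈ B. If μ is a regular infinite cardinal with μ < λ, then B has a subalgebra B' such that density(B' ↾ x) = μ for every nonzero x ∈ B'. -/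
/-- The density of `T ↾ x` for `T` a subalgebra of `B`. -/
noncomputable def densIn {B : Type u} [BooleanAlgebra B] (T : Set B) (x : B) :
    Cardinal.{u} :=
  sInf {c | ∃ D : Set B, D ⊆ T ∧ (∀ d ∈ D, ⊥ < d ∧ d ≤ x) ∧
    (∀ z ∈ T, ⊥ < z → z ≤ x → ∃ d ∈ D, d ≤ z) ∧ Cardinal.mk D = c}

/-!
`B'` is the union of a chain `S_j` (`j < μ`) of subalgebras of size `≤ μ`: `S_j` is generated by
the union `T` of the earlier stages together with, for each `x ∈ T`, an element `0 < z ≤ x` lying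
above no nonzero element of `T`; such a `z` exists because `|T| ≤ μ < λ = density (B ↾ x)`.
Since `|B'| ≤ μ`, every density in `B'` is at most `μ`. Conversely, by regularity of `μ`, a set
`D ⊆ B'` of size `< μ` lies, together with `x`, inside some union `T` of earlier stages, and the
element `z` added below `x` over `T` shows that `D` is not dense below `x`.
-/

universe u v

open Cardinal Set

namespace BooleanSubalgebra

variable {α : Type u} [BooleanAlgebra α]

def ofSubring (R : Subring (AsBoolRing α)) : BooleanSubalgebra α where
  carrier := toBoolRing ⁻¹' R
  supClosed' a ha b hb := by
    have : toBoolRing (a ⊔ b) = toBoolRing a + toBoolRing b + toBoolRing a * toBoolRing b :=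
      (symmDiff_symmDiff_inf a b).symm
    simp only [mem_preimage, SetLike.mem_coe, this] at ha hb ⊢
    exact R.add_mem (R.add_mem ha hb) (R.mul_mem ha hb)
  infClosed' a ha b hb := R.mul_mem ha hb
  bot_mem' := R.zero_mem
  compl_mem' {a} ha := by
    have : toBoolRing aᶜ = 1 + toBoolRing a := (top_symmDiff a).symm
    simp only [mem_preimage, SetLike.mem_coe, this] at ha ⊢
    exact R.add_mem R.one_mem ha

-- The closure lies in the subring generated by `s` in the Boolean ring `AsBoolRing α`.
theorem mk_closure_le (s : Set α) : #(closure s) ≤ max #s ℵ₀ := by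
  let R := (Algebra.adjoin ℤ (toBoolRing '' s)).toSubring
  have hle : closure s ≤ ofSubring R := closure_le.2 fun a ha =>
    Algebra.subset_adjoin (R := ℤ) (A := AsBoolRing α) ⟨a, ha, rfl⟩
  have hR := Algebra.lift_cardinalMk_adjoin_le ℤ (toBoolRing '' s)
  simp only [lift_uzero, mk_int, lift_aleph0, mk_image_eq toBoolRing.injective] at hR
  calc #(closure s) ≤ #(ofSubring R) := mk_le_mk_of_subset hle
    _ = #(Algebra.adjoin ℤ (toBoolRing '' s)) := rfl
    _ ≤ max #s ℵ₀ := hR.trans (by rw [max_comm ℵ₀, max_assoc, max_self])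

end BooleanSubalgebra

section TransfiniteIter

variable {α : Type u} (F : Set α → Set α)

noncomputable def transfiniteIter : Ordinal.{u} → Set α :=
  WellFoundedLT.fix fun o ih => F (⋃ (j) (h : j < o), ih j h)

theorem transfiniteIter_eq (o : Ordinal.{u}) :
    transfiniteIter F o = F (⋃ j < o, transfiniteIter F j) :=
  WellFoundedLT.fix_eq _ o

variable {F}

theorem transfiniteIter_subset_biUnion {j o : Ordinal.{u}} (h : j < o) :
    transfiniteIter F j ⊆ ⋃ i < o, transfiniteIter F i :=
  subset_biUnion_of_mem (u := transfiniteIter F) h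

theorem transfiniteIter_mono (hF : ∀ s, s ⊆ F s) : Monotone (transfiniteIter F) := by
  intro j o h
  rcases h.eq_or_lt with rfl | h
  · exact subset_rfl
  · rw [transfiniteIter_eq F o]
    exact (transfiniteIter_subset_biUnion h).trans (hF _)

theorem mk_biUnion_transfiniteIter_le {μ : Cardinal.{u}} (hμ : ℵ₀ ≤ μ)
    (hF : ∀ s : Set α, #s ≤ μ → #(F s) ≤ μ) {o : Ordinal.{u}} (ho : o ≤ μ.ord) :
    #(⋃ j < o, transfiniteIter F j) ≤ μ := by
  induction o using WellFoundedLT.induction with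
  | _ o ih =>
    refine mk_biUnion_le_of_le (Cardinal.card_le_of_le_ord ho) hμ _ fun j hj => ?_
    rw [transfiniteIter_eq]
    exact hF _ (ih j hj (hj.le.trans ho))

end TransfiniteIter

theorem Cardinal.IsRegular.exists_lt_ord_subset_biUnion {α : Type u} {c : Cardinal.{u}}
    (hc : c.IsRegular) {A : Ordinal.{u} → Set α} {D : Set α} (hD : #D < c)
    (hDA : D ⊆ ⋃ j < c.ord, A j) : ∃ o < c.ord, D ⊆ ⋃ j < o, A j := by
  have hmem : ∀ d : D, ∃ j < c.ord, (d : α) ∈ A j := fun d => by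
    simpa only [mem_iUnion, exists_prop] using hDA d.2
  choose idx hidx_lt hidx_mem using hmem
  have hsup : ⨆ d, idx d < c.ord := Ordinal.iSup_lt_of_lt_cof (by rwa [hc.cof_ord]) hidx_lt
  refine ⟨Order.succ (⨆ d, idx d), (isSuccLimit_ord hc.aleph0_le).succ_lt hsup, fun d hd => ?_⟩
  exact mem_biUnion ((Ordinal.le_iSup idx ⟨d, hd⟩).trans_lt (Order.lt_succ _))
    (hidx_mem ⟨d, hd⟩)

section Density

variable {B : Type u} [BooleanAlgebra B]

def IsDenseBelow (T : Set B) (x : B) (D : Set B) : Prop :=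
  D ⊆ T ∧ (∀ d ∈ D, ⊥ < d ∧ d ≤ x) ∧ ∀ z ∈ T, ⊥ < z → z ≤ x → ∃ d ∈ D, d ≤ z

theorem isDenseBelow_sep (T : Set B) (x : B) : IsDenseBelow T x {t ∈ T | ⊥ < t ∧ t ≤ x} :=
  ⟨sep_subset _ _, fun _ hd => hd.2, fun z hz hz0 hzx => ⟨z, ⟨hz, hz0, hzx⟩, le_rfl⟩⟩

theorem densIn_le_mk {T D : Set B} {x : B} (hD : IsDenseBelow T x D) : densIn T x ≤ #D :=
  csInf_le' ⟨D, hD.1, hD.2.1, hD.2.2, rfl⟩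

theorem densIn_le_mk_self (T : Set B) (x : B) : densIn T x ≤ #T :=
  (densIn_le_mk (isDenseBelow_sep T x)).trans (mk_le_mk_of_subset (sep_subset _ _))

theorem le_densIn {T : Set B} {x : B} {c : Cardinal.{u}}
    (h : ∀ D, IsDenseBelow T x D → c ≤ #D) : c ≤ densIn T x :=
  le_csInf ⟨_, _, (isDenseBelow_sep T x).1, (isDenseBelow_sep T x).2.1,
    (isDenseBelow_sep T x).2.2, rfl⟩ fun _ ⟨D, h₁, h₂, h₃, hD⟩ => hD ▸ h D ⟨h₁, h₂, h₃⟩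

theorem exists_splitter {T : Set B} {x : B} (hT : #T < densIn univ x) :
    ∃ z, ⊥ < z ∧ z ≤ x ∧ ∀ t ∈ T, ⊥ < t → ¬ t ≤ z := by
  by_contra! h
  have hD : IsDenseBelow univ x {t ∈ T | ⊥ < t ∧ t ≤ x} :=
    ⟨subset_univ _, fun _ ht => ht.2, fun z _ hz hzx =>
      let ⟨t, ht, ht0, htz⟩ := h z hz hzx
      ⟨t, ⟨ht, ht0, htz.trans hzx⟩, htz⟩⟩
  exact (densIn_le_mk hD).trans (mk_le_mk_of_subset (sep_subset _ _)) |>.not_gt hT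

-- Junk when no such element exists; it is only used under the hypothesis of `splitter_spec`.
noncomputable def splitter (T : Set B) (x : B) : B :=
  Classical.epsilon fun z => ⊥ < z ∧ z ≤ x ∧ ∀ t ∈ T, ⊥ < t → ¬ t ≤ z

theorem splitter_spec {T : Set B} {x : B} (hT : #T < densIn univ x) :
    ⊥ < splitter T x ∧ splitter T x ≤ x ∧ ∀ t ∈ T, ⊥ < t → ¬ t ≤ splitter T x :=
  Classical.epsilon_spec (exists_splitter hT)

end Density

section Construction

variable {B : Type u} [BooleanAlgebra B]

theorem isSubalg_coe (L : BooleanSubalgebra B) : IsSubalg (L : Set B) :=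
  ⟨L.bot_mem, L.top_mem, fun _ hx _ hy => L.sup_mem hx hy, fun _ hx _ hy => L.inf_mem hx hy,
    fun _ hx => L.compl_mem hx⟩

theorem isSubalg_biUnion {A : Ordinal.{v} → Set B} (hA : Monotone A)
    (hsub : ∀ j, IsSubalg (A j)) {o : Ordinal.{v}} (ho : 0 < o) : IsSubalg (⋃ j < o, A j) := by
  have common : ∀ x ∈ ⋃ j < o, A j, ∀ y ∈ ⋃ j < o, A j, ∃ j < o, x ∈ A j ∧ y ∈ A j := by
    simp only [mem_iUnion, exists_prop]
    rintro x ⟨j, hj, hx⟩ y ⟨k, hk, hy⟩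
    exact ⟨max j k, max_lt hj hk, hA (le_max_left j k) hx, hA (le_max_right j k) hy⟩
  refine ⟨mem_biUnion ho (hsub 0).1, mem_biUnion ho (hsub 0).2.1, fun x hx y hy => ?_,
    fun x hx y hy => ?_, fun x hx => ?_⟩
  · obtain ⟨j, hj, hx, hy⟩ := common x hx y hy
    exact mem_biUnion hj ((hsub j).2.2.1 x hx y hy)
  · obtain ⟨j, hj, hx, hy⟩ := common x hx y hy
    exact mem_biUnion hj ((hsub j).2.2.2.1 x hx y hy)
  · obtain ⟨j, hj, hx, -⟩ := common x hx x hx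
    exact mem_biUnion hj ((hsub j).2.2.2.2 x hx)

noncomputable def splitStep (T : Set B) : Set B :=
  BooleanSubalgebra.closure (T ∪ splitter T '' T)

theorem subset_splitStep (T : Set B) : T ⊆ splitStep T :=
  subset_union_left.trans BooleanSubalgebra.subset_closure

theorem splitter_mem_splitStep {T : Set B} {x : B} (hx : x ∈ T) : splitter T x ∈ splitStep T :=
  BooleanSubalgebra.subset_closure (Or.inr (mem_image_of_mem _ hx))

theorem mk_splitStep_le {μ : Cardinal.{u}} (hμ : ℵ₀ ≤ μ) {T : Set B} (hT : #T ≤ μ) :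
    #(splitStep T) ≤ μ := by
  have hgen : #(T ∪ splitter T '' T : Set B) ≤ μ :=
    (mk_union_le _ _).trans (add_le_of_le hμ hT (mk_image_le.trans hT))
  exact (BooleanSubalgebra.mk_closure_le _).trans (max_le hgen hμ)

noncomputable def splitChain (μ : Cardinal.{u}) : Set B :=
  ⋃ j < μ.ord, transfiniteIter splitStep j

theorem isSubalg_splitChain {μ : Cardinal.{u}} (hμ : ℵ₀ ≤ μ) :
    IsSubalg (splitChain (B := B) μ) := by
  refine isSubalg_biUnion (transfiniteIter_mono subset_splitStep) (fun j => ?_)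
    (isSuccLimit_ord hμ).pos
  rw [transfiniteIter_eq]
  exact isSubalg_coe _

theorem mk_splitChain_le {μ : Cardinal.{u}} (hμ : ℵ₀ ≤ μ) : #(splitChain (B := B) μ) ≤ μ :=
  mk_biUnion_transfiniteIter_le hμ (fun _ => mk_splitStep_le hμ) le_rfl

theorem le_densIn_splitChain {μ : Cardinal.{u}} (hμ : μ.IsRegular) {x : B}
    (hxS : x ∈ splitChain μ) (hx : μ < densIn univ x) : μ ≤ densIn (splitChain μ) x := by
  refine le_densIn fun D hD => ?_
  by_contra! hDμ
  have hsmall : #(insert x D : Set B) < μ := mk_insert_le.trans_lt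
    (add_lt_of_lt hμ.aleph0_le hDμ (one_lt_aleph0.trans_le hμ.aleph0_le))
  obtain ⟨o, ho, hsub⟩ := hμ.exists_lt_ord_subset_biUnion hsmall (insert_subset hxS hD.1)
  set T := ⋃ j < o, transfiniteIter (splitStep (B := B)) j
  have hT : #T < densIn univ x :=
    (mk_biUnion_transfiniteIter_le hμ.aleph0_le (fun _ => mk_splitStep_le hμ.aleph0_le)
      ho.le).trans_lt hx
  obtain ⟨hz0, hzx, hzT⟩ := splitter_spec hT
  have hzS : splitter T x ∈ splitChain μ := by
    refine mem_biUnion ho ?_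
    rw [transfiniteIter_eq]
    exact splitter_mem_splitStep (hsub (mem_insert x D))
  obtain ⟨d, hdD, hdz⟩ := hD.2.2 _ hzS hz0 hzx
  exact hzT d (hsub (mem_insert_of_mem x hdD)) (hD.2.1 d hdD).1 hdz

end Construction

/-- If every nonzero relative algebra of `B` has density `λ` and `μ` is an
infinite regular cardinal `< λ`, then `B` has a subalgebra all of whose
nonzero relative algebras have density `μ`. -/
theorem stmt_12 {B : Type u} [BooleanAlgebra B] (lam mu : Cardinal.{u})
    (hlam : ∀ x : B, x ≠ ⊥ → densIn Set.univ x = lam)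
    (hmu : mu.IsRegular) (hmulam : mu < lam) :
    ∃ S : Set B, IsSubalg S ∧ ∀ x ∈ S, x ≠ ⊥ → densIn S x = mu := by
  refine ⟨splitChain mu, isSubalg_splitChain hmu.aleph0_le, fun x hxS hx => ?_⟩
  have hμx : mu < densIn univ x := hlam x hx ▸ hmulam
  exact le_antisymm ((densIn_le_mk_self _ x).trans (mk_splitChain_le hmu.aleph0_le))
    (le_densIn_splitChain hmu hxS hμx)
end

section
/- Let B be a Boolean algebra and x ∈ B. The following are equivalent: (a) there exists an automorphism f of B with f(x) ≠ x; (b) there exist y, z ∈ B with 0 < y ≤ x, 0 < z ≤ 1 − x, and B ↾ y ≅ B ↾ z. -/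
/-- There is an automorphism of `B` moving `x` iff there are nonzero `y ≤ x`
and `z ≤ xᶜ` with `B ↾ y ≅ B ↾ z`. -/
theorem stmt_13 {B : Type*} [BooleanAlgebra B] (x : B) :
    (∃ f : B ≃o B, f x ≠ x) ↔
      ∃ y z : B, ⊥ < y ∧ y ≤ x ∧ ⊥ < z ∧ z ≤ xᶜ ∧
        Nonempty ((Set.Iic y) ≃o (Set.Iic z)) := by
  constructor
  · rintro ⟨f, hf⟩
    have key : ∀ g : B ≃o B, ¬ g x ≤ x → ∃ y z : B, ⊥ < y ∧ y ≤ x ∧ ⊥ < z ∧ z ≤ xᶜ ∧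
        Nonempty ((Set.Iic y) ≃o (Set.Iic z)) := by
      intro g hg
      have hwne : g x ⊓ xᶜ ≠ ⊥ := by
        intro h
        exact hg (by rwa [← sdiff_eq, sdiff_eq_bot_iff] at h)
      obtain ⟨y, hgy⟩ : ∃ y, g y = g x ⊓ xᶜ := ⟨g.symm _, g.apply_symm_apply _⟩
      refine ⟨y, g x ⊓ xᶜ, ?_, ?_, bot_lt_iff_ne_bot.2 hwne, inf_le_right, ⟨hgy ▸ g.Iic y⟩⟩
      · rw [bot_lt_iff_ne_bot]
        intro h
        apply hwne
        rw [← hgy, h, map_bot]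
      · have : g y ≤ g x := hgy ▸ inf_le_left
        exact g.le_iff_le.1 this
    by_cases h1 : f x ≤ x
    · apply key f.symm
      intro h2
      exact hf (le_antisymm h1 (f.symm_apply_le.mp h2))
    · exact key f h1
  · rintro ⟨y, z, hy0, hyx, hz0, hzc, ⟨h⟩⟩
    set w := (y ⊔ z)ᶜ with hwdef
    have dzy : Disjoint z y := (disjoint_compl_left.mono hzc hyx)
    have dyz : Disjoint y z := dzy.symm
    have dwy : Disjoint w y := disjoint_compl_left.mono_right le_sup_left
    have dwz : Disjoint w z := disjoint_compl_left.mono_right le_sup_right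
    let F : B → B := fun b =>
      ((h ⟨b ⊓ y, inf_le_right⟩ : Set.Iic z) : B) ⊔
        ((h.symm ⟨b ⊓ z, inf_le_right⟩ : Set.Iic y) : B) ⊔ b ⊓ w
    have hmono : Monotone F := by
      intro a b hab
      refine sup_le_sup (sup_le_sup ?_ ?_) (inf_le_inf_right _ hab)
      · exact Subtype.coe_le_coe.2 (h.monotone (Subtype.mk_le_mk.2 (inf_le_inf_right _ hab)))
      · exact Subtype.coe_le_coe.2 (h.symm.monotone (Subtype.mk_le_mk.2 (inf_le_inf_right _ hab)))
    have hFF : ∀ b, F (F b) = b := by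
      intro b
      set p : B := ((h ⟨b ⊓ y, inf_le_right⟩ : Set.Iic z) : B) with hp'
      set q : B := ((h.symm ⟨b ⊓ z, inf_le_right⟩ : Set.Iic y) : B) with hq'
      have hp : p ≤ z := (h ⟨b ⊓ y, inf_le_right⟩).2
      have hq : q ≤ y := (h.symm ⟨b ⊓ z, inf_le_right⟩).2
      have hFb : F b = p ⊔ q ⊔ b ⊓ w := rfl
      have h1 : F b ⊓ y = q := by
        rw [hFb, inf_sup_right, inf_sup_right, (dzy.mono_left hp).eq_bot,
          ((dwy.mono_left inf_le_right).eq_bot : (b ⊓ w) ⊓ y = ⊥),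
          inf_eq_left.2 hq]
        simp
      have h2 : F b ⊓ z = p := by
        rw [hFb, inf_sup_right, inf_sup_right, (dyz.mono_left hq).eq_bot,
          ((dwz.mono_left inf_le_right).eq_bot : (b ⊓ w) ⊓ z = ⊥),
          inf_eq_left.2 hp]
        simp
      have h3 : F b ⊓ w = b ⊓ w := by
        rw [hFb, inf_sup_right, inf_sup_right, (dwy.symm.mono_left hq).eq_bot,
          (dwz.symm.mono_left hp).eq_bot, inf_assoc, inf_idem]
        simp
      have e1 : (⟨F b ⊓ y, inf_le_right⟩ : Set.Iic y) = h.symm ⟨b ⊓ z, inf_le_right⟩ :=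
        Subtype.ext h1
      have e2 : (⟨F b ⊓ z, inf_le_right⟩ : Set.Iic z) = h ⟨b ⊓ y, inf_le_right⟩ :=
        Subtype.ext h2
      show ((h ⟨F b ⊓ y, inf_le_right⟩ : Set.Iic z) : B) ⊔
        ((h.symm ⟨F b ⊓ z, inf_le_right⟩ : Set.Iic y) : B) ⊔ F b ⊓ w = b
      rw [e1, e2, h.apply_symm_apply, h.symm_apply_apply, h3]
      show b ⊓ z ⊔ b ⊓ y ⊔ b ⊓ w = b
      rw [← inf_sup_left, ← inf_sup_left, sup_comm z y, hwdef, sup_compl_eq_top, inf_top_eq]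
    let f : B ≃o B :=
      { toFun := F, invFun := F, left_inv := hFF, right_inv := hFF,
        map_rel_iff' := by
          intro a b
          simp only [Equiv.coe_fn_mk]
          constructor
          · intro hle
            have := hmono hle
            rwa [hFF, hFF] at this
          · exact fun hle => hmono hle }
    refine ⟨f, ?_⟩
    have hxy : x ⊓ y = y := inf_eq_right.2 hyx
    have hxz : x ⊓ z = ⊥ := (disjoint_compl_right.mono_right hzc).eq_bot
    have e1 : (⟨x ⊓ y, inf_le_right⟩ : Set.Iic y) = ⊤ := Subtype.ext (by simpa using hxy)
    have e2 : (⟨x ⊓ z, inf_le_right⟩ : Set.Iic z) = ⊥ := Subtype.ext (by simpa using hxz)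
    have hfx : f x = z ⊔ x ⊓ w := by
      show ((h ⟨x ⊓ y, inf_le_right⟩ : Set.Iic z) : B) ⊔
        ((h.symm ⟨x ⊓ z, inf_le_right⟩ : Set.Iic y) : B) ⊔ x ⊓ w = z ⊔ x ⊓ w
      rw [e1, e2, h.map_top, h.symm.map_bot, Set.Iic.coe_top, Set.Iic.coe_bot, sup_bot_eq]
    intro heq
    have hzx : z ≤ x := by
      rw [← heq, hfx]; exact le_sup_left
    have : z ≤ ⊥ := by
      have := le_inf hzx hzc
      rwa [inf_compl_eq_bot] at this
    exact (bot_lt_iff_ne_bot.1 hz0) (le_bot_iff.1 this)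
end

section
/- Let B be a Boolean algebra and ⟨I_ζ : ζ < α⟩ a family of ideals of B with I_ζ ∩ I_ξ = {0} for ζ ≠ ξ. Then the number of ideals of the ideal I = Σ_{ζ<α} I_ζ (the ideal generated by the union) is at least the product of the numbers of ideals of the I_ζ: id(I) ≥ Π_{ζ<α} id(I_ζ). -/
/-- An ideal of a Boolean algebra, as a subset. -/
def IsIdeal {B : Type*} [BooleanAlgebra B] (I : Set B) : Prop :=
  ⊥ ∈ I ∧ (∀ x ∈ I, ∀ y, y ≤ x → y ∈ I) ∧ (∀ x ∈ I, ∀ y ∈ I, x ⊔ y ∈ I)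

/-- If `⟨I ζ⟩` is a family of ideals with pairwise intersection `{⊥}` and `K`
is the ideal generated by their union, then the number of ideals contained in
`K` is at least the product of the numbers of ideals contained in each `I ζ`. -/
theorem stmt_14 {B : Type u} [BooleanAlgebra B] {ι : Type u} (I : ι → Set B)
    (hI : ∀ ζ, IsIdeal (I ζ))
    (hdisj : ∀ ζ ξ, ζ ≠ ξ → I ζ ∩ I ξ = {⊥})
    (K : Set B) (hK : IsIdeal K) (hle : ∀ ζ, I ζ ⊆ K)
    (hmin : ∀ J : Set B, IsIdeal J → (∀ ζ, I ζ ⊆ J) → K ⊆ J) :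
    Cardinal.prod (fun ζ => Cardinal.mk {J : Set B // IsIdeal J ∧ J ⊆ I ζ}) ≤
      Cardinal.mk {J : Set B // IsIdeal J ∧ J ⊆ K} := by
  classical
  rw [← Cardinal.mk_pi]
  -- the "generated ideal" of a family
  set S : (∀ ζ, {J : Set B // IsIdeal J ∧ J ⊆ I ζ}) → Set B := fun g =>
    {x | ∃ s : Finset ι, ∃ f : ι → B, (∀ ζ ∈ s, f ζ ∈ (g ζ).1) ∧ x ≤ s.sup f}
    with hS
  have hmem : ∀ g ξ x, x ∈ (g ξ : {J : Set B // IsIdeal J ∧ J ⊆ I ξ}).1 → x ∈ S g := by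
    intro g ξ x hx
    exact ⟨{ξ}, fun _ => x, by simpa using hx, by simp⟩
  have hideal : ∀ g, IsIdeal (S g) := by
    intro g
    refine ⟨⟨∅, fun _ => ⊥, by simp, by simp⟩, ?_, ?_⟩
    · rintro x ⟨s, f, hf, hx⟩ y hy
      exact ⟨s, f, hf, le_trans hy hx⟩
    · rintro x ⟨s, f, hf, hx⟩ y ⟨t, f', hf', hy⟩
      refine ⟨s ∪ t, fun ζ => (if ζ ∈ s then f ζ else ⊥) ⊔ (if ζ ∈ t then f' ζ else ⊥),
        ?_, ?_⟩
      · intro ζ hζ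
        have h0 := (g ζ).2.1.1
        have := (g ζ).2.1.2.2
        apply this <;> split <;>
          first
          | exact hf _ ‹_›
          | exact hf' _ ‹_›
          | exact h0
      · refine sup_le (le_trans hx ?_) (le_trans hy ?_)
        · refine Finset.sup_le fun ζ hζ => ?_
          refine le_trans ?_ (Finset.le_sup (Finset.mem_union_left _ hζ))
          simp [hζ]
        · refine Finset.sup_le fun ζ hζ => ?_
          refine le_trans ?_ (Finset.le_sup (Finset.mem_union_right _ hζ))
          simp [hζ]
  have hsub : ∀ g, S g ⊆ K := by
    rintro g x ⟨s, f, hf, hx⟩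
    refine hK.2.1 _ ?_ _ hx
    exact Finset.sup_induction hK.1 (fun a ha b hb => hK.2.2 a ha b hb)
      (fun ζ hζ => hle ζ ((g ζ).2.2 (hf ζ hζ)))
  -- key: S g ∩ I ξ = g ξ
  have hkey : ∀ g ξ x, x ∈ S g → x ∈ I ξ → x ∈ (g ξ).1 := by
    rintro g ξ x ⟨s, f, hf, hx⟩ hxI
    have hx' : x = s.sup (fun ζ => x ⊓ f ζ) := by
      rw [← Finset.sup_inf_distrib_left]
      exact (inf_eq_left.mpr hx).symm
    rw [hx']
    refine Finset.sup_induction (g ξ).2.1.1 (fun a ha b hb => (g ξ).2.1.2.2 a ha b hb) ?_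
    intro ζ hζ
    by_cases hζξ : ζ = ξ
    · subst hζξ
      exact (g ζ).2.1.2.1 _ (hf ζ hζ) _ inf_le_right
    · have h1 : x ⊓ f ζ ∈ I ξ := (hI ξ).2.1 _ hxI _ inf_le_left
      have h2 : x ⊓ f ζ ∈ I ζ := (hI ζ).2.1 _ ((g ζ).2.2 (hf ζ hζ)) _ inf_le_right
      have : x ⊓ f ζ ∈ I ξ ∩ I ζ := ⟨h1, h2⟩
      rw [hdisj ξ ζ (Ne.symm hζξ)] at this
      rw [Set.mem_singleton_iff.mp this]
      exact (g ξ).2.1.1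
  refine Cardinal.mk_le_of_injective (f := fun g => ⟨S g, hideal g, hsub g⟩) ?_
  intro g g' h
  have hSS : S g = S g' := congrArg Subtype.val h
  funext ξ
  apply Subtype.ext
  apply Set.Subset.antisymm
  · intro x hx
    exact hkey g' ξ x (hSS ▸ hmem g ξ x hx) ((g ξ).2.2 hx)
  · intro x hx
    exact hkey g ξ x (hSS ▸ hmem g' ξ x hx) ((g' ξ).2.2 hx)
end
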